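/- Let C ⊆ F_2^n be a linear code, f = (2^n/|C|)·1_C, and T ⊆ [n]. Then E‖E(f|T)‖_q^q = 2^{(q-1)(|T| - r_C(T))} for every q ≥ 1, where r_C(T) is the rank of the columns of a generating matrix of C indexed by T. -/

import Mathlib

open Finset

/-- Rank of the column submatrix of `G` indexed by `T`. -/
noncomputable def colRank {n k : ℕ} (G : Fin k → Fin n → ZMod 2) (T : Finset (Fin n)) : ℕ :=
  Module.finrank (ZMod 2)
    (Submodule.span (ZMod 2) ((fun j => fun i => G i j) '' (T : Set (Fin n))))

open Classical in
/-- The scaled indicator function `f = (2^n/|C|)·1_C`. -/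
noncomputable def codeFn (n : ℕ) (C : Submodule (ZMod 2) (Fin n → ZMod 2))
    (x : Fin n → ZMod 2) : ℝ :=
  if x ∈ C then (2 : ℝ) ^ n / (Nat.card C) else 0

/-- Conditional expectation of `f` given the coordinates in `T`. -/
noncomputable def condExpZ (n : ℕ) (f : (Fin n → ZMod 2) → ℝ) (T : Finset (Fin n))
    (x : Fin n → ZMod 2) : ℝ :=
  (∑ y : Fin n → ZMod 2, if ∀ i ∈ T, y i = x i then f y else 0) / 2 ^ (n - T.card)

/-! Let `π` restrict vectors to the coordinates in `T` and put `D = π C`. The rows of the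
generator matrix restricted to `T` span `D`, so `|D| = 2 ^ r_C(T)` (row rank = column
rank).
If `π x ∈ D`, the `y ∈ C` with `π y = π x` form a coset of `C ⊓ ker π`, of size `|C| / |D|`,
whence `E(f|T)(x) = 2 ^ |T| / |D|`, and `E(f|T)(x) = 0` otherwise. A proportion `|D| / 2 ^ |T|`
of all `x` satisfy `π x ∈ D`, so the `q`-th moment is `(2 ^ |T| / |D|) ^ (q - 1)`. -/

namespace LinearMap
variable {R M N : Type*} [Semiring R] [AddCommGroup M] [AddCommGroup N] [Module R M]
  [Module R N]

theorem natCard_ker_mul_natCard_range (f : M →ₗ[R] N) :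
    Nat.card (ker f) * Nat.card (range f) = Nat.card M := by
  simpa [AddSubgroup.index_ker] using f.toAddMonoidHom.ker.card_mul_index

theorem card_fiber_mul_natCard_range [Fintype M] [DecidableEq N] (f : M →ₗ[R] N) {y : N}
    (hy : y ∈ range f) :
    #{x | f x = y} * Nat.card (range f) = Nat.card M := by
  classical
  rw [AddMonoidHom.card_fiber_eq_of_mem_range f hy ⟨0, map_zero f⟩,
    ← natCard_ker_mul_natCard_range f, Nat.card_eq_fintype_card (α := ker f), Fintype.card_subtype]
  simp only [mem_ker]

theorem card_preimage_mul_natCard_of_surjective [Fintype M] [Fintype N] (f : M →ₗ[R] N)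
    (hf : Function.Surjective f) (D : Submodule R N) [DecidablePred (· ∈ D)] :
    #{x | f x ∈ D} * Nat.card N = Nat.card D * Nat.card M := by
  let := Classical.decEq N
  have hfiber (y : N) : #{x | f x = y} * Nat.card N = Nat.card M := by
    rw [← Nat.card_congr (Submodule.topEquiv (R := R)).toEquiv, ← range_eq_top.mpr hf]
    exact card_fiber_mul_natCard_range f (hf y)
  have hpreimage : #{x | f x ∈ D} = ∑ y with y ∈ D, #{x | f x = y} := by
    rw [sum_card_fiberwise_eq_card_filter]; simp
  rw [hpreimage, sum_mul, sum_congr rfl fun y _ => hfiber y, sum_const, smul_eq_mul,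
    Nat.card_eq_fintype_card (α := D), Fintype.card_subtype]

end LinearMap

namespace Submodule
variable {R M N : Type*} [Ring R] [AddCommGroup M] [AddCommGroup N] [Module R M]
  [Module R N] [Fintype M] [DecidableEq N]

theorem card_fiber_mul_natCard_map (p : Submodule R M) [DecidablePred (· ∈ p)] (f : M →ₗ[R] N)
    {y : N} (hy : y ∈ p.map f) :
    #{x | x ∈ p ∧ f x = y} * Nat.card (p.map f) = Nat.card p := by
  have hrange : LinearMap.range (f ∘ₗ p.subtype) = p.map f := by
    rw [LinearMap.range_comp, range_subtype]
  rw [← hrange] at hy ⊢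
  rw [← (f ∘ₗ p.subtype).card_fiber_mul_natCard_range hy, ← Fintype.card_subtype,
    ← Fintype.card_subtype]
  congr 1
  exact Fintype.card_congr (Equiv.subtypeSubtypeEquivSubtypeInter (· ∈ p) (f · = y)).symm

end Submodule

section Restriction
variable (R : Type*) [Semiring R] {ι : Type*} (T : Finset ι)

def restrictCoords : (ι → R) →ₗ[R] (T → R) :=
  LinearMap.funLeft R R (↑)

variable {R T}

theorem restrictCoords_eq_iff {x y : ι → R} :
    restrictCoords R T y = restrictCoords R T x ↔ ∀ i ∈ T, y i = x i := by
  simp [restrictCoords, funext_iff, LinearMap.funLeft_apply]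

theorem restrictCoords_surjective : Function.Surjective (restrictCoords R T) :=
  LinearMap.funLeft_surjective_of_injective _ _ _ Subtype.val_injective

end Restriction

theorem card_restrictCoords_mem_mul {R ι : Type*} [Ring R] [Fintype R] [Fintype ι] [DecidableEq ι]
    {T : Finset ι} (D : Submodule R (T → R)) [DecidablePred (· ∈ D)] :
    #{x | restrictCoords R T x ∈ D} * Fintype.card R ^ T.card =
      Nat.card D * Fintype.card R ^ Fintype.card ι := by
  simpa using (restrictCoords R T).card_preimage_mul_natCard_of_surjective
    restrictCoords_surjective D

theorem natCard_map_restrictCoords_span {n k : ℕ} (G : Fin k → Fin n → ZMod 2)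
    (T : Finset (Fin n)) :
    Nat.card ((Submodule.span (ZMod 2) (Set.range G)).map (restrictCoords _ T)) =
      2 ^ colRank G T := by
  let M : Matrix (Fin k) T (ZMod 2) := fun i j => G i j
  have hrows : (Submodule.span (ZMod 2) (Set.range G)).map (restrictCoords _ T) =
      Submodule.span (ZMod 2) (Set.range M.row) := by
    rw [Submodule.map_span, ← Set.range_comp]; rfl
  have hcols : (fun j => fun i => G i j) '' (T : Set (Fin n)) = Set.range M.col := by
    rw [Set.image_eq_range]; rfl
  rw [Module.natCard_eq_pow_finrank (K := ZMod 2), Nat.card_zmod, hrows, colRank, hcols,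
    ← Matrix.rank_eq_finrank_span_row, ← Matrix.rank_eq_finrank_span_cols]

open Classical in
theorem condExpZ_codeFn (n : ℕ) (C : Submodule (ZMod 2) (Fin n → ZMod 2)) (T : Finset (Fin n))
    (x : Fin n → ZMod 2) :
    condExpZ n (codeFn n C) T x =
      if restrictCoords _ T x ∈ C.map (restrictCoords _ T) then
        (2 : ℝ) ^ T.card / Nat.card (C.map (restrictCoords _ T))
      else 0 := by
  have hsum : ∑ y, (if ∀ i ∈ T, y i = x i then codeFn n C y else 0) =
      #{y | y ∈ C ∧ restrictCoords _ T y = restrictCoords _ T x} * (2 ^ n / Nat.card C) := by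
    rw [natCast_card_filter, sum_mul]
    refine sum_congr rfl fun y _ => ?_
    simp only [← restrictCoords_eq_iff, codeFn]
    split_ifs <;> simp_all
  rw [condExpZ, hsum]
  split_ifs with hx
  · have hfiber := C.card_fiber_mul_natCard_map (restrictCoords _ T) hx
    have hpow : (2 : ℝ) ^ n = 2 ^ T.card * 2 ^ (n - T.card) := by
      rw [← pow_add, Nat.add_sub_cancel' (T.card_le_univ.trans_eq (Fintype.card_fin n))]
    have hCcard : (Nat.card C : ℝ) ≠ 0 := Nat.cast_ne_zero.mpr Nat.card_pos.ne'
    rw [← hfiber, Nat.cast_mul] at hCcard ⊢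
    rw [hpow]
    field_simp [mul_ne_zero_iff.mp hCcard]
  · have : #{y | y ∈ C ∧ restrictCoords _ T y = restrictCoords _ T x} = 0 := by
      refine card_eq_zero.mpr (filter_eq_empty_iff.mpr ?_)
      rintro y - ⟨hy, hyx⟩
      exact hx ⟨y, hy, hyx⟩
    simp [this]

theorem condExp_code_norm (n k : ℕ) (G : Fin k → Fin n → ZMod 2)
    (C : Submodule (ZMod 2) (Fin n → ZMod 2))
    (hC : C = Submodule.span (ZMod 2) (Set.range G)) (T : Finset (Fin n))
    (q : ℝ) (hq : 1 ≤ q) :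
    (∑ x : Fin n → ZMod 2, condExpZ n (codeFn n C) T x ^ q) / 2 ^ n =
      2 ^ ((q - 1) * ((T.card : ℝ) - colRank G T)) := by
  classical
  have hD : Nat.card (C.map (restrictCoords _ T)) = 2 ^ colRank G T :=
    hC ▸ natCard_map_restrictCoords_span G T
  set D := C.map (restrictCoords (ZMod 2) T)
  set a : ℝ := 2 ^ T.card / Nat.card D with ha_def
  set N : ℝ := ((#{x | restrictCoords _ T x ∈ D} : ℕ) : ℝ)
  have hD_pos : (0 : ℝ) < Nat.card D := by rw [hD]; positivity
  have ha : a = 2 ^ ((T.card : ℝ) - colRank G T) := by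
    rw [ha_def, Real.rpow_sub two_pos, Real.rpow_natCast, Real.rpow_natCast, hD, Nat.cast_pow,
      Nat.cast_ofNat]
  have hcount : N * a = 2 ^ n := by
    have h := congrArg (Nat.cast : ℕ → ℝ) (card_restrictCoords_mem_mul D)
    push_cast [ZMod.card, Fintype.card_fin] at h
    rw [ha_def, ← mul_div_assoc, h, mul_div_cancel_left₀ _ hD_pos.ne']
  have hsum : ∑ x, condExpZ n (codeFn n C) T x ^ q = N * a ^ q := by
    simp_rw [condExpZ_codeFn, apply_ite (· ^ q), Real.zero_rpow (by linarith : q ≠ 0)]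
    rw [sum_ite, sum_const_zero, add_zero, sum_const, nsmul_eq_mul]
  have hN : N ≠ 0 := left_ne_zero_of_mul (by rw [hcount]; positivity)
  calc (∑ x, condExpZ n (codeFn n C) T x ^ q) / 2 ^ n
      = N * a ^ q / (N * a) := by rw [hsum, hcount]
    _ = a ^ q / a := mul_div_mul_left _ _ hN
    _ = a ^ (q - 1) := (Real.rpow_sub_one (div_pos (by positivity) hD_pos).ne' q).symm
    _ = 2 ^ ((q - 1) * ((T.card : ℝ) - colRank G T)) := by
        rw [ha, ← Real.rpow_mul zero_le_two, mul_comm]
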